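/- Let k be a field and g a Lie algebra over k with trivial center, and let X = k ⊕ g with Δ(a,x) = (a,x)⊗(1,0) + (1,0)⊗(0,x) and q((a,x)⊗(b,y)) = (ab, bx + [x,y]). Let R : X⊗X → X⊗X be the Yang–Baxter operator R(u⊗v) = v⁽¹⁾⊗q(u⊗v⁽²⁾), and for a BSD 2-cocycle φ : X⊗X → X let c_φ(u⊗v) = v⁽¹⁾⊗φ(u⊗v⁽²⁾). If there exists a linear map g' : X → X such that c_φ = R∘(g'⊗id + id⊗g') − (g'⊗id + id⊗g')∘R, then there exists a coderivation f : X → X with φ = δ¹f; i.e. the induced map from second BSD cohomology of X to the second Yang–Baxter cohomology of R is injective. -/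

import Mathlib

open TensorProduct

noncomputable section

variable (k : Type*) [Field k] (g : Type*) [LieRing g] [LieAlgebra k g]

/-- The comultiplication `Δ(a,x) = (a,x)⊗(1,0) + (1,0)⊗(0,x)` on `X = k ⊕ g`. -/
def Dmap : (k × g) →ₗ[k] (k × g) ⊗[k] (k × g) :=
  (TensorProduct.mk k (k × g) (k × g)).flip ((1 : k), (0 : g))
    + TensorProduct.mk k (k × g) (k × g) ((1 : k), (0 : g)) ∘ₗ
      (LinearMap.inr k k g ∘ₗ LinearMap.snd k k g)

/-- The Lie bracket of `g` as a bilinear map. -/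
def brk : g →ₗ[k] g →ₗ[k] g :=
  LinearMap.mk₂ k (fun x y => ⁅x, y⁆) add_lie smul_lie lie_add lie_smul

/-- The self-distributive map `q((a,x)⊗(b,y)) = (ab, b•x + ⁅x,y⁆)` on `X = k ⊕ g`. -/
def qmap : (k × g) ⊗[k] (k × g) →ₗ[k] (k × g) :=
  LinearMap.inl k k g ∘ₗ LinearMap.mul' k k ∘ₗ
      TensorProduct.map (LinearMap.fst k k g) (LinearMap.fst k k g)
    + LinearMap.inr k k g ∘ₗ
      ((TensorProduct.rid k g).toLinearMap ∘ₗ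
          TensorProduct.map (LinearMap.snd k k g) (LinearMap.fst k k g)
        + TensorProduct.lift (brk k g) ∘ₗ
          TensorProduct.map (LinearMap.snd k k g) (LinearMap.snd k k g))

/-- `f : X → X` is a coderivation of the coalgebra `X = k ⊕ g`. -/
def IsCoderivation (f : (k × g) →ₗ[k] (k × g)) : Prop :=
  Dmap k g ∘ₗ f
    = (TensorProduct.map f LinearMap.id + TensorProduct.map LinearMap.id f) ∘ₗ Dmap k g

/-- The BSD 2-cochain condition `Δ∘φ = (φ⊗q + q⊗φ)∘(id⊗τ⊗id)∘(Δ⊗Δ)`. -/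
def IsBSD2Cochain (φ : (k × g) ⊗[k] (k × g) →ₗ[k] (k × g)) : Prop :=
  Dmap k g ∘ₗ φ
    = (TensorProduct.map φ (qmap k g) + TensorProduct.map (qmap k g) φ) ∘ₗ
        (TensorProduct.tensorTensorTensorComm k (k × g) (k × g) (k × g) (k × g)).toLinearMap ∘ₗ
        TensorProduct.map (Dmap k g) (Dmap k g)

/-- `(u⊗v)⊗w ↦ (u⊗w⁽¹⁾)⊗(v⊗w⁽²⁾)`, the Sweedler-shuffling used in the BSD differential. -/
def Smap : ((k × g) ⊗[k] (k × g)) ⊗[k] (k × g) →ₗ[k]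
    ((k × g) ⊗[k] (k × g)) ⊗[k] ((k × g) ⊗[k] (k × g)) :=
  (TensorProduct.tensorTensorTensorComm k (k × g) (k × g) (k × g) (k × g)).toLinearMap ∘ₗ
    TensorProduct.map LinearMap.id (Dmap k g)

/-- The BSD first differential
`δ¹f(u⊗v) = f(q(u⊗v)) − q(f(u)⊗v) − q(u⊗f(v))`. -/
def bsdD1 (f : (k × g) →ₗ[k] (k × g)) : (k × g) ⊗[k] (k × g) →ₗ[k] (k × g) :=
  f ∘ₗ qmap k g - qmap k g ∘ₗ TensorProduct.map f LinearMap.id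
    - qmap k g ∘ₗ TensorProduct.map LinearMap.id f

/-- The BSD second differential
`δ²φ(u⊗v⊗w) = q(φ(u⊗v)⊗w) + φ(q(u⊗v)⊗w) − φ(q(u⊗w⁽¹⁾)⊗q(v⊗w⁽²⁾))`
`− q(φ(u⊗w⁽¹⁾)⊗q(v⊗w⁽²⁾)) − q(q(u⊗w⁽¹⁾)⊗φ(v⊗w⁽²⁾))`. -/
def bsdD2 (φ : (k × g) ⊗[k] (k × g) →ₗ[k] (k × g)) :
    ((k × g) ⊗[k] (k × g)) ⊗[k] (k × g) →ₗ[k] (k × g) :=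
  qmap k g ∘ₗ TensorProduct.map φ LinearMap.id
    + φ ∘ₗ TensorProduct.map (qmap k g) LinearMap.id
    - φ ∘ₗ TensorProduct.map (qmap k g) (qmap k g) ∘ₗ Smap k g
    - qmap k g ∘ₗ TensorProduct.map φ (qmap k g) ∘ₗ Smap k g
    - qmap k g ∘ₗ TensorProduct.map (qmap k g) φ ∘ₗ Smap k g

/-- The Yang–Baxter operator `R(u⊗v) = v⁽¹⁾ ⊗ q(u⊗v⁽²⁾)` associated to `g`. -/
def Rop : (k × g) ⊗[k] (k × g) →ₗ[k] (k × g) ⊗[k] (k × g) :=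
  TensorProduct.map LinearMap.id (qmap k g) ∘ₗ
    (TensorProduct.leftComm k (k × g) (k × g) (k × g)).toLinearMap ∘ₗ
    TensorProduct.map LinearMap.id (Dmap k g)

/-- `c_φ(u⊗v) = v⁽¹⁾ ⊗ φ(u⊗v⁽²⁾)`. -/
def cop (φ : (k × g) ⊗[k] (k × g) →ₗ[k] (k × g)) :
    (k × g) ⊗[k] (k × g) →ₗ[k] (k × g) ⊗[k] (k × g) :=
  TensorProduct.map LinearMap.id φ ∘ₗ
    (TensorProduct.leftComm k (k × g) (k × g) (k × g)).toLinearMap ∘ₗ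
    TensorProduct.map LinearMap.id (Dmap k g)

lemma Dmap_apply (u : k × g) :
    Dmap k g u = u ⊗ₜ[k] ((1:k),(0:g)) + ((1:k),(0:g)) ⊗ₜ[k] ((0:k), u.2) := by
  simp [Dmap]

lemma qmap_apply (u v : k × g) :
    qmap k g (u ⊗ₜ[k] v) = (u.1 * v.1, v.1 • u.2 + ⁅u.2, v.2⁆) := by
  simp [qmap, brk]

def pkk : (k × g) ⊗[k] (k × g) →ₗ[k] k :=
  LinearMap.mul' k k ∘ₗ TensorProduct.map (LinearMap.fst k k g) (LinearMap.fst k k g)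

def pkg : (k × g) ⊗[k] (k × g) →ₗ[k] g :=
  (TensorProduct.lid k g).toLinearMap ∘ₗ
    TensorProduct.map (LinearMap.fst k k g) (LinearMap.snd k k g)

def pgg : (k × g) ⊗[k] (k × g) →ₗ[k] g ⊗[k] g :=
  TensorProduct.map (LinearMap.snd k k g) (LinearMap.snd k k g)

lemma pkk_apply (u v : k × g) : pkk k g (u ⊗ₜ[k] v) = u.1 * v.1 := by simp [pkk]
lemma pkg_apply (u v : k × g) : pkg k g (u ⊗ₜ[k] v) = u.1 • v.2 := by simp [pkg]
lemma pgg_apply (u v : k × g) : pgg k g (u ⊗ₜ[k] v) = u.2 ⊗ₜ[k] v.2 := by simp [pgg]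

lemma central_aux {k : Type*} [Field k] {g : Type*} [LieRing g] [LieAlgebra k g]
    (hcenter : ∀ x : g, (∀ y : g, ⁅x, y⁆ = 0) → x = 0)
    (w : g) (H : ∀ x : g, x ⊗ₜ[k] w + w ⊗ₜ[k] x = (0 : g ⊗[k] g)) : w = 0 := by
  by_cases hw : w = 0
  · exact hw
  obtain ⟨F, hF⟩ : ∃ F : Module.Dual k g, F w ≠ 0 := by
    by_contra h
    push_neg at h
    exact hw ((Module.forall_dual_apply_eq_zero_iff k w).mp h)
  refine hcenter w fun y => ?_
  have h1 := congrArg ((TensorProduct.lid k g).toLinearMap ∘ₗ TensorProduct.map F LinearMap.id)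
    (H y)
  simp only [LinearMap.coe_comp, Function.comp_apply, map_add, TensorProduct.map_tmul,
    LinearMap.id_coe, id_eq, LinearEquiv.coe_coe, TensorProduct.lid_tmul, map_zero] at h1
  have h2 : F w • ⁅w, y⁆ = 0 := by
    have : ⁅w, F y • w + F w • y⁆ = 0 := by rw [h1]; simp
    simpa [lie_smul] using this
  rcases smul_eq_zero.mp h2 with h | h
  · exact absurd h hF
  · exact h

set_option maxHeartbeats 1000000 in
/-- Let `g` have trivial center and let `φ` be a BSD 2-cocycle of `X = k ⊕ g`.  If the
Yang–Baxter 2-cocycle `c_φ` is a Yang–Baxter coboundary, i.e.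
`c_φ = R∘(g'⊗id + id⊗g') − (g'⊗id + id⊗g')∘R` for some linear `g' : X → X`, then `φ` is a
BSD 2-coboundary `φ = δ¹f` for some coderivation `f`; hence the induced map from second
BSD cohomology to second Yang–Baxter cohomology is injective. -/
theorem stmt19 {k : Type*} [Field k] {g : Type*} [LieRing g] [LieAlgebra k g]
    (hcenter : ∀ x : g, (∀ y : g, ⁅x, y⁆ = 0) → x = 0)
    (φ : (k × g) ⊗[k] (k × g) →ₗ[k] (k × g))
    (hφ : IsBSD2Cochain k g φ) (hcocycle : bsdD2 k g φ = 0)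
    (hcob : ∃ g' : (k × g) →ₗ[k] (k × g),
      cop k g φ
        = Rop k g ∘ₗ (TensorProduct.map g' LinearMap.id + TensorProduct.map LinearMap.id g')
          - (TensorProduct.map g' LinearMap.id + TensorProduct.map LinearMap.id g') ∘ₗ
            Rop k g) :
    ∃ f : (k × g) →ₗ[k] (k × g), IsCoderivation k g f ∧ φ = bsdD1 k g f := by
  obtain ⟨g', hc⟩ := hcob
  -- components of φ from the cochain condition
  have hee1 : (φ (((1:k),(0:g)) ⊗ₜ[k] ((1:k),(0:g)))).1 = 0 := by
    have h := congrArg (pkk k g) (LinearMap.congr_fun hφ (((1:k),(0:g)) ⊗ₜ[k] ((1:k),(0:g))))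
    simpa [Dmap_apply, qmap_apply, pkk_apply, TensorProduct.map_tmul, tmul_add, add_tmul,
      TensorProduct.tensorTensorTensorComm_tmul, Prod.mk_zero_zero] using h
  have hee2 : (φ (((1:k),(0:g)) ⊗ₜ[k] ((1:k),(0:g)))).2 = 0 := by
    refine central_aux (k := k) hcenter _ fun x => ?_
    have h := congrArg (pgg k g) (LinearMap.congr_fun hφ (((0:k),x) ⊗ₜ[k] ((1:k),(0:g))))
    simp only [Dmap_apply, qmap_apply, pgg_apply, TensorProduct.map_tmul, tmul_add, add_tmul,
      TensorProduct.tensorTensorTensorComm_tmul, LinearMap.coe_comp, Function.comp_apply] at h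
    simp [Dmap_apply, qmap_apply, pgg_apply, TensorProduct.map_tmul, tmul_add, add_tmul,
      TensorProduct.tensorTensorTensorComm_tmul, Prod.mk_zero_zero] at h
    rw [add_comm] at h
    exact h.symm
  have hee : φ (((1:k),(0:g)) ⊗ₜ[k] ((1:k),(0:g))) = 0 := by
    ext
    · exact hee1
    · exact hee2
  have hey : ∀ y : g, φ (((1:k),(0:g)) ⊗ₜ[k] ((0:k),y)) = 0 := by
    intro y
    have h1 : (φ (((1:k),(0:g)) ⊗ₜ[k] ((0:k),y))).1 = 0 := by
      have h := congrArg (pkk k g) (LinearMap.congr_fun hφ (((1:k),(0:g)) ⊗ₜ[k] ((0:k),y)))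
      simpa [Dmap_apply, qmap_apply, pkk_apply, TensorProduct.map_tmul, tmul_add, add_tmul,
        TensorProduct.tensorTensorTensorComm_tmul, Prod.mk_zero_zero] using h
    have h2 : (φ (((1:k),(0:g)) ⊗ₜ[k] ((0:k),y))).2 = 0 := by
      refine central_aux (k := k) hcenter _ fun x => ?_
      have h := congrArg (pgg k g) (LinearMap.congr_fun hφ (((0:k),x) ⊗ₜ[k] ((0:k),y)))
      simp [Dmap_apply, qmap_apply, pgg_apply, TensorProduct.map_tmul, tmul_add, add_tmul,
        TensorProduct.tensorTensorTensorComm_tmul, hee] at h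
      rw [add_comm] at h
      exact h.symm
    ext
    · exact h1
    · exact h2
  -- g'-components
  set lam : k := (g' ((1:k),(0:g))).1 with hlam
  have hm0 : (g' ((1:k),(0:g))).2 = 0 := by
    refine hcenter _ fun y => ?_
    have h := congrArg (pkg k g) (LinearMap.congr_fun hc (((1:k),(0:g)) ⊗ₜ[k] ((0:k), y)))
    simp [cop, Rop, Dmap_apply, qmap_apply, pkg_apply, TensorProduct.map_tmul, tmul_add,
      add_tmul, TensorProduct.leftComm_tmul, hee, hey, Prod.mk_zero_zero] at h
    exact h.symm
  have hxe : ∀ x : g, φ (((0:k),x) ⊗ₜ[k] ((1:k),(0:g))) = 0 := by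
    intro x
    have h1 : (φ (((0:k),x) ⊗ₜ[k] ((1:k),(0:g)))).1 = 0 := by
      have h := congrArg (pkk k g) (LinearMap.congr_fun hφ (((0:k),x) ⊗ₜ[k] ((1:k),(0:g))))
      simpa [Dmap_apply, qmap_apply, pkk_apply, TensorProduct.map_tmul, tmul_add, add_tmul,
        TensorProduct.tensorTensorTensorComm_tmul, Prod.mk_zero_zero] using h
    have h2 : (φ (((0:k),x) ⊗ₜ[k] ((1:k),(0:g)))).2 = 0 := by
      have h := congrArg (pkg k g) (LinearMap.congr_fun hc (((0:k),x) ⊗ₜ[k] ((1:k),(0:g))))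
      simp [cop, Rop, Dmap_apply, qmap_apply, pkg_apply, TensorProduct.map_tmul, tmul_add,
        add_tmul, TensorProduct.leftComm_tmul, hm0, Prod.mk_zero_zero] at h
      rw [h]
      abel
    ext
    · exact h1
    · exact h2
  set m' : g →ₗ[k] g := LinearMap.snd k k g ∘ₗ g' ∘ₗ LinearMap.inr k k g with hm'
  have hm'apply : ∀ z : g, (g' ((0:k),z)).2 = m' z := fun z => rfl
  have hxy : ∀ x y : g, φ (((0:k),x) ⊗ₜ[k] ((0:k),y))
      = (0, ⁅m' x, y⁆ + ⁅x, m' y⁆ - (lam • ⁅x, y⁆ + m' ⁅x, y⁆)) := by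
    intro x y
    have h1 : (φ (((0:k),x) ⊗ₜ[k] ((0:k),y))).1 = 0 := by
      have h := congrArg (pkk k g) (LinearMap.congr_fun hφ (((0:k),x) ⊗ₜ[k] ((0:k),y)))
      simpa [Dmap_apply, qmap_apply, pkk_apply, TensorProduct.map_tmul, tmul_add, add_tmul,
        TensorProduct.tensorTensorTensorComm_tmul] using h
    have h2 := congrArg (pkg k g) (LinearMap.congr_fun hc (((0:k),x) ⊗ₜ[k] ((0:k),y)))
    simp only [cop, Rop, Dmap_apply, qmap_apply, pkg_apply, TensorProduct.map_tmul, tmul_add,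
      add_tmul, TensorProduct.leftComm_tmul] at h2
    simp [cop, Rop, Dmap_apply, qmap_apply, pkg_apply, TensorProduct.map_tmul, tmul_add,
      add_tmul, TensorProduct.leftComm_tmul, hm'apply] at h2
    ext
    · exact h1
    · rw [h2]
      simp [hm'apply]
      abel
  -- the coderivation
  set f : (k × g) →ₗ[k] (k × g) :=
    LinearMap.inr k k g ∘ₗ (lam • LinearMap.id - m') ∘ₗ LinearMap.snd k k g with hf
  have hfapply : ∀ u : k × g, f u = ((0:k), lam • u.2 - m' u.2) := fun u => rfl
  refine ⟨f, ?_, ?_⟩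
  · -- coderivation
    apply LinearMap.ext
    intro u
    simp [Dmap_apply, hfapply, TensorProduct.map_tmul, tmul_add, add_tmul, Prod.mk_zero_zero]
  · -- φ = bsdD1 f
    apply TensorProduct.ext'
    intro u v
    have hu : u = u.1 • ((1:k),(0:g)) + ((0:k), u.2) := by ext <;> simp
    have hv : v = v.1 • ((1:k),(0:g)) + ((0:k), v.2) := by ext <;> simp
    have lhs : φ (u ⊗ₜ[k] v)
        = (0, ⁅m' u.2, v.2⁆ + ⁅u.2, m' v.2⁆ - (lam • ⁅u.2, v.2⁆ + m' ⁅u.2, v.2⁆)) := by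
      conv_lhs => rw [hu, hv]
      simp only [add_tmul, tmul_add, smul_tmul, tmul_smul, map_add, map_smul,
        hee, hey, hxe, hxy, smul_zero]
      simp
    rw [lhs]
    simp only [bsdD1, LinearMap.sub_apply, LinearMap.coe_comp, Function.comp_apply,
      TensorProduct.map_tmul, LinearMap.id_coe, id_eq, qmap_apply, hfapply]
    ext
    · simp
    · simp [lie_smul, smul_lie, sub_lie, lie_sub, smul_add, smul_sub, map_add, map_smul,
        smul_smul, mul_comm]
      abel

end
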